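/- Main theorem (finite-time attitude synchronization): let G be a connected undirected graph on n nodes with m edges and incidence matrix B, B̂ = B ⊗ I₃. Suppose x : [0, ∞) → ℝ^{3n} is locally Lipschitz, Σ_{i=1}^{n} ‖xᵢ(0)‖₂² < π², and for almost every t ≥ 0 the derivative x′(t) exists and x′(t) = −L_{x(t)} B̂ s(t) for some sign-selection s(t) ∈ ℝ^{3m} for B̂ᵀ x(t). Then ‖xᵢ(t)‖₂ < π for all i and all t ≥ 0, and there exists a finite time t* ≥ 0 such that for all t ≥ t*, x₁(t) = x₂(t) = ⋯ = xₙ(t), i.e., consensus is reached in finite time. -/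

import Mathlib

/-!
W = Σᵢ ‖xᵢ‖² decreases at rate 2‖B̂ᵀx‖₁, because xᵢ is an eigenvector of L_{xᵢ}ᵀ; hence
‖xᵢ(t)‖ ≤ ρ := √W(0) < π for all t, a region where the symmetric part of L_{xᵢ} is bounded below
by cos(ρ/2) > 0. At almost every time a vanishing coordinate of z = B̂ᵀx also has vanishing
derivative, so the sign-selection s may replace sign z in the derivative of V = ‖z‖₁, giving
V' = -Σᵢ (B̂s)ᵢᵀ L_{xᵢ} (B̂s)ᵢ ≤ -cos(ρ/2)‖B̂s‖². Since ⟨B̂s, x⟩ = ‖z‖₁ ≥ ‖z‖₂, the vector B̂s is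
bounded away from 0 uniformly over sign-selections of nonzero z ∈ range B̂ᵀ. So V decreases at a
uniform rate while positive and vanishes in finite time; B̂ᵀx = 0 on a connected graph is consensus.
-/

open Matrix Real

noncomputable section

/-- The skew-symmetric "hat" matrix of a vector in ℝ³. -/
def hatm (p : Fin 3 → ℝ) : Matrix (Fin 3) (Fin 3) ℝ :=
  !![0, -p 2, p 1; p 2, 0, -p 0; -p 1, p 0, 0]

/-- The Euclidean (ℓ²) norm on ℝ³. -/
def norm2 (p : Fin 3 → ℝ) : ℝ := Real.sqrt (∑ i, p i ^ 2)

/-- The unnormalized sinc function: α · sinc α = sin α, sinc 0 = 1. -/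
def sinc (α : ℝ) : ℝ := if α = 0 then 1 else Real.sin α / α

/-- c(θ) = sinc(θ)/sinc²(θ/2). -/
def cfun (θ : ℝ) : ℝ := _root_.sinc θ / _root_.sinc (θ / 2) ^ 2

/-- The symmetric part L¹ₓ of the transition matrix (L¹₀ := I₃). -/
def L1mat (x : Fin 3 → ℝ) : Matrix (Fin 3) (Fin 3) ℝ :=
  if x = 0 then 1 else
    cfun (norm2 x) • (1 : Matrix (Fin 3) (Fin 3) ℝ)
      + ((1 - cfun (norm2 x)) / norm2 x ^ 2) • vecMulVec x x

/-- The transition matrix Lₓ of the axis-angle kinematics (L₀ := I₃). -/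
def Lmat (x : Fin 3 → ℝ) : Matrix (Fin 3) (Fin 3) ℝ :=
  if x = 0 then 1 else
    cfun (norm2 x) • (1 : Matrix (Fin 3) (Fin 3) ℝ)
      + ((1 - cfun (norm2 x)) / norm2 x ^ 2) • vecMulVec x x
      + (1 / 2 : ℝ) • hatm x

/-- `s` is a sign-selection for `z`: each component lies in [−1,1] and equals
`sign (z ℓ)` whenever `z ℓ ≠ 0`. -/
def SignSel {k : Type*} (s z : k → ℝ) : Prop :=
  ∀ ℓ, s ℓ ∈ Set.Icc (-1 : ℝ) 1 ∧ (z ℓ ≠ 0 → s ℓ = Real.sign (z ℓ))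

/-- Vector-valued (ℝ³-blocks) sign-selection, componentwise. -/
def SignSelV {m : ℕ} (s z : Fin m → Fin 3 → ℝ) : Prop :=
  ∀ e k, s e k ∈ Set.Icc (-1 : ℝ) 1 ∧ (z e k ≠ 0 → s e k = Real.sign (z e k))

open MeasureTheory Filter Set Topology
open scoped InnerProductSpace Kronecker

namespace AbsolutelyContinuousOnInterval

theorem comp_lipschitzWith {X Y : Type*} [PseudoMetricSpace X] [PseudoMetricSpace Y]
    {f : ℝ → X} {φ : X → Y} {K : NNReal} {a b : ℝ} (hφ : LipschitzWith K φ)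
    (hf : AbsolutelyContinuousOnInterval f a b) :
    AbsolutelyContinuousOnInterval (fun t => φ (f t)) a b := by
  unfold AbsolutelyContinuousOnInterval at hf ⊢
  apply squeeze_zero (fun _ => Finset.sum_nonneg fun _ _ => dist_nonneg) (fun E => ?_)
    (by simpa using hf.const_mul (K : ℝ))
  rw [Finset.mul_sum]
  exact Finset.sum_le_sum fun i _ => hφ.dist_le_mul _ _

theorem finset_sum {ι : Type*} {s : Finset ι} {f : ι → ℝ → ℝ} {a b : ℝ}
    (hf : ∀ i ∈ s, AbsolutelyContinuousOnInterval (f i) a b) :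
    AbsolutelyContinuousOnInterval (fun t => ∑ i ∈ s, f i t) a b := by
  classical
  induction s using Finset.induction_on with
  | empty =>
    simpa using (LipschitzWith.const (0 : ℝ)).lipschitzOnWith.absolutelyContinuousOnInterval
  | insert i s hi ih =>
    simp only [Finset.sum_insert hi]
    exact (hf i (Finset.mem_insert_self i s)).fun_add
      (ih fun j hj => hf j (Finset.mem_insert_of_mem hj))

theorem apply_apply {ι d : Type*} [Fintype ι] [Fintype d]
    {x : ℝ → ι → d → ℝ} {a b : ℝ} (hx : AbsolutelyContinuousOnInterval x a b) (i : ι) (k : d) :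
    AbsolutelyContinuousOnInterval (fun u => x u i k) a b :=
  hx.comp_lipschitzWith (φ := fun X : ι → d → ℝ => X i k)
    ((LipschitzWith.eval (α := fun _ : d => ℝ) k).comp
      (LipschitzWith.eval (α := fun _ : ι => d → ℝ) i))

theorem abs {f : ℝ → ℝ} {a b : ℝ}
    (hf : AbsolutelyContinuousOnInterval f a b) :
    AbsolutelyContinuousOnInterval (fun t => |f t|) a b :=
  hf.comp_lipschitzWith (φ := fun r : ℝ => ‖r‖) lipschitzWith_one_norm

theorem sub_le_mul_of_ae_deriv_le {f : ℝ → ℝ} {a b c : ℝ}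
    (hf : AbsolutelyContinuousOnInterval f a b) (hab : a ≤ b)
    (hd : ∀ᵐ t, t ∈ Ioo a b → deriv f t ≤ c) : f b - f a ≤ c * (b - a) := by
  have hle : deriv f ≤ᵐ[volume.restrict (Ioo a b)] fun _ => c :=
    (ae_restrict_iff' measurableSet_Ioo).2 hd
  rw [← hf.integral_deriv_eq_sub, intervalIntegral.integral_of_le hab,
    integral_Ioc_eq_integral_Ioo]
  calc ∫ t in Ioo a b, deriv f t
      ≤ ∫ _ in Ioo a b, c :=
        setIntegral_mono_ae_restrict
          (hf.intervalIntegrable_deriv.1.mono_set Ioo_subset_Ioc_self)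
          (integrableOn_const measure_Ioo_lt_top.ne) hle
    _ = c * (b - a) := by simp [hab, mul_comm]

end AbsolutelyContinuousOnInterval

theorem antitoneOn_of_ae_deriv_nonpos {f : ℝ → ℝ} {a : ℝ}
    (hf : ∀ b, a ≤ b → AbsolutelyContinuousOnInterval f a b)
    (hd : ∀ᵐ t, a < t → deriv f t ≤ 0) : AntitoneOn f (Ici a) := by
  intro u hu v _ huv
  have hac : AbsolutelyContinuousOnInterval f u v :=
    (hf v (le_trans hu huv)).mono
      (uIcc_subset_uIcc (by rw [uIcc_of_le (le_trans hu huv)]; exact ⟨hu, huv⟩) right_mem_uIcc)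
  have := hac.sub_le_mul_of_ae_deriv_le huv
    (hd.mono fun t ht htuv => ht (lt_of_le_of_lt hu htuv.1))
  linarith

theorem eq_zero_of_ae_deriv_le_neg {f : ℝ → ℝ} {κ : ℝ} (hκ : 0 < κ) (hf0 : ∀ t, 0 ≤ f t)
    (hf : ∀ b, 0 ≤ b → AbsolutelyContinuousOnInterval f 0 b)
    (hd : ∀ᵐ t, 0 < t → 0 < f t → deriv f t ≤ -κ) :
    ∀ t ≥ f 0 / κ, f t = 0 := by
  have hd' : ∀ᵐ t, 0 < t → deriv f t ≤ 0 := by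
    filter_upwards [hd] with t ht htpos
    rcases (hf0 t).eq_or_lt with h | h
    -- a zero of `f ≥ 0` is a local minimum, so `deriv f t = 0` whether or not `f` is
    -- differentiable there
    · have hmin : IsLocalMin f t := Eventually.of_forall fun u => h ▸ hf0 u
      exact hmin.deriv_eq_zero.le
    · linarith [ht htpos h]
  have hanti := antitoneOn_of_ae_deriv_nonpos hf hd'
  intro t ht
  have ht0 : 0 ≤ t := le_trans (div_nonneg (hf0 0) hκ.le) ht
  by_contra hne
  have hpos : ∀ u ∈ Icc 0 t, 0 < f u := fun u hu =>
    lt_of_lt_of_le ((hf0 t).lt_of_ne' hne) (hanti hu.1 ht0 hu.2)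
  have := (hf t ht0).sub_le_mul_of_ae_deriv_le ht0
    (hd.mono fun u hu hu' => hu hu'.1 (hpos u (Ioo_subset_Icc_self hu')))
  rw [ge_iff_le, div_le_iff₀ hκ] at ht
  linarith [hpos t ⟨ht0, le_rfl⟩]

/-- The points of `g ⁻¹' {c}` isolated from the right form a countable set, and at any other
point of it `g` takes the value `c` arbitrarily close by, which forces the derivative to vanish. -/
theorem ae_deriv_eq_zero_of_eq {F : Type*} [NormedAddCommGroup F] [NormedSpace ℝ F]
    (g : ℝ → F) (c : F) : ∀ᵐ t, g t = c → deriv g t = 0 := by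
  have hnull := (countable_setOfPred_isolated_right_within (s := g ⁻¹' {c})).measure_zero volume
  filter_upwards [measure_eq_zero_iff_ae_notMem.mp hnull] with t ht hgt
  refine deriv_zero_of_frequently_const (c := c) ?_
  have hne : (𝓝[g ⁻¹' {c} ∩ Ioi t] t).NeBot := ⟨fun h => ht ⟨hgt, h⟩⟩
  rw [inter_comm, nhdsWithin_inter'] at hne
  exact (frequently_iff_neBot.2 hne).filter_mono (nhdsWithin_mono t fun u hu => ne_of_gt hu)

theorem HasDerivAt.abs_of_mul_eq_abs {g : ℝ → ℝ} {d σ t : ℝ} (hg : HasDerivAt g d t)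
    (hσ : σ * g t = |g t|) (hd : g t = 0 → d = 0) :
    HasDerivAt (fun u => |g u|) (σ * d) t := by
  rcases lt_trichotomy (g t) 0 with hneg | hzero | hpos
  · obtain rfl : σ = -1 := by
      rw [abs_of_neg hneg] at hσ
      nlinarith
    exact (hasDerivAt_abs_neg hneg).comp t hg
  · rw [hd hzero, mul_zero]
    rw [hasDerivAt_iff_isLittleO] at hg ⊢
    simpa [hzero, hd hzero] using hg.norm_left
  · obtain rfl : σ = 1 := by
      rw [abs_of_pos hpos] at hσ
      nlinarith
    exact (hasDerivAt_abs_pos hpos).comp t hg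

theorem HasDerivAt.dotProduct {ι : Type*} [Fintype ι] {f g : ℝ → ι → ℝ} {f' g' : ι → ℝ} {t : ℝ}
    (hf : HasDerivAt f f' t) (hg : HasDerivAt g g' t) :
    HasDerivAt (fun u => f u ⬝ᵥ g u) (f' ⬝ᵥ g t + f t ⬝ᵥ g') t := by
  rw [_root_.dotProduct, _root_.dotProduct, ← Finset.sum_add_distrib]
  exact HasDerivAt.fun_sum fun k _ => (hasDerivAt_pi.1 hf k).mul (hasDerivAt_pi.1 hg k)

theorem SignSel.mul_eq_abs {ι : Type*} {s z : ι → ℝ} (h : SignSel s z) (ℓ : ι) :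
    s ℓ * z ℓ = |z ℓ| := by
  rcases lt_trichotomy (z ℓ) 0 with hneg | hzero | hpos
  · rw [(h ℓ).2 hneg.ne, Real.sign_of_neg hneg, abs_of_neg hneg]; ring
  · rw [hzero, mul_zero, abs_zero]
  · rw [(h ℓ).2 hpos.ne', Real.sign_of_pos hpos, abs_of_pos hpos, one_mul]

theorem SignSel.dotProduct_eq {ι : Type*} [Fintype ι] {s z : ι → ℝ} (h : SignSel s z) :
    s ⬝ᵥ z = ∑ ℓ, |z ℓ| :=
  Finset.sum_congr rfl fun ℓ _ => h.mul_eq_abs ℓ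

theorem LinearMap.exists_pos_le_norm_of_norm_le_inner {E F : Type*} [NormedAddCommGroup E]
    [InnerProductSpace ℝ E] [FiniteDimensional ℝ E] [NormedAddCommGroup F] [NormedSpace ℝ F]
    (A : E →ₗ[ℝ] F) :
    ∃ σ > 0, ∀ s z : E, z ∈ (LinearMap.ker A)ᗮ → z ≠ 0 → ‖z‖ ≤ ⟪s, z⟫_ℝ → σ ≤ ‖A s‖ := by
  set K := (LinearMap.ker A)ᗮ
  have hinj : LinearMap.ker (A ∘ₗ K.subtype) = ⊥ := by
    rw [LinearMap.ker_comp, ← Submodule.disjoint_iff_comap_eq_bot]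
    exact (LinearMap.ker A).orthogonal_disjoint.symm
  obtain ⟨C, hC0, hC⟩ := (A ∘ₗ K.subtype).exists_antilipschitzWith hinj
  refine ⟨(C : ℝ)⁻¹, by positivity, fun s z hz hz0 hsz => ?_⟩
  obtain ⟨u, hu, w, hw, rfl⟩ := (LinearMap.ker A).exists_add_mem_mem_orthogonal s
  have hAw : A (u + w) = A w := by rw [map_add, LinearMap.mem_ker.1 hu, zero_add]
  have hwz : ⟪u + w, z⟫_ℝ = ⟪w, z⟫_ℝ := by
    rw [inner_add_left, Submodule.inner_right_of_mem_orthogonal hu hz, zero_add]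
  have hw1 : 1 ≤ ‖w‖ := by
    have := real_inner_le_norm w z
    have hz' : 0 < ‖z‖ := norm_pos_iff.2 hz0
    nlinarith
  have hwC : ‖w‖ ≤ C * ‖A w‖ :=
    ZeroHomClass.bound_of_antilipschitz (A ∘ₗ K.subtype) hC ⟨w, hw⟩
  rw [hAw, inv_le_iff_one_le_mul₀ (by positivity)]
  linarith

namespace Matrix

theorem vec_dotProduct_vec_eq_sum {ι d : Type*} [Fintype ι] [Fintype d] (X Y : Matrix ι d ℝ) :
    vec X ⬝ᵥ vec Y = ∑ i, X i ⬝ᵥ Y i := by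
  rw [vec_dotProduct_vec]
  simp only [trace, diag, mul_apply, transpose_apply, dotProduct]
  exact Finset.sum_comm

theorem vec_dotProduct_vec_mul {ι κ d : Type*} [Fintype ι] [Fintype κ] [Fintype d]
    (B : Matrix ι κ ℝ) (X : Matrix ι d ℝ) (S : Matrix κ d ℝ) :
    vec X ⬝ᵥ vec (B * S) = vec (Bᵀ * X) ⬝ᵥ vec S := by
  rw [vec_dotProduct_vec, vec_dotProduct_vec, transpose_mul, transpose_transpose, Matrix.mul_assoc]

theorem exists_pos_le_dotProduct_mulVec_of_signSel {ι κ : Type*} [Fintype ι] [Fintype κ]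
    [DecidableEq κ] (M : Matrix ι κ ℝ) :
    ∃ σ > 0, ∀ s x, SignSel s (x ᵥ* M) → x ᵥ* M ≠ 0 → σ ≤ M *ᵥ s ⬝ᵥ M *ᵥ s := by
  obtain ⟨σ, hσ, h⟩ := (toLpLin 2 2 M).exists_pos_le_norm_of_norm_le_inner
  refine ⟨σ ^ 2, by positivity, fun s x hs hz => ?_⟩
  have hker : WithLp.toLp 2 (x ᵥ* M) ∈ (LinearMap.ker (toLpLin 2 2 M))ᗮ := by
    rw [Submodule.mem_orthogonal]
    intro u hu
    have hMu : M *ᵥ u.ofLp = 0 := by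
      simpa [toLpLin_apply] using LinearMap.mem_ker.1 hu
    rw [EuclideanSpace.inner_eq_star_dotProduct, star_trivial, ← dotProduct_mulVec, hMu,
      dotProduct_zero]
  have hnorm : ‖WithLp.toLp 2 (x ᵥ* M)‖ ≤ ⟪WithLp.toLp 2 s, WithLp.toLp 2 (x ᵥ* M)⟫_ℝ := by
    rw [EuclideanSpace.inner_toLp_toLp, star_trivial, dotProduct_comm, hs.dotProduct_eq,
      ← pow_le_pow_iff_left₀ (norm_nonneg _) (Finset.sum_nonneg fun _ _ => abs_nonneg _)
        two_ne_zero, EuclideanSpace.real_norm_sq_eq]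
    simpa only [sq_abs] using Finset.sum_sq_le_sq_sum_of_nonneg (s := Finset.univ)
      (f := fun ℓ => |(x ᵥ* M) ℓ|) fun _ _ => abs_nonneg _
  have hMs := pow_le_pow_left₀ hσ.le (h _ _ hker (by simpa using hz) hnorm) 2
  rwa [← real_inner_self_eq_norm_sq, toLpLin_toLp, EuclideanSpace.inner_toLp_toLp,
    star_trivial] at hMs

theorem exists_pos_le_vec_mul_dotProduct_of_signSel {ι κ : Type*} [Fintype ι] [Fintype κ]
    [DecidableEq κ] (B : Matrix ι κ ℝ) (d : Type*) [Fintype d] [DecidableEq d] :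
    ∃ σ > 0, ∀ (S : Matrix κ d ℝ) (X : Matrix ι d ℝ), SignSel (vec S) (vec (Bᵀ * X)) →
      Bᵀ * X ≠ 0 → σ ≤ vec (B * S) ⬝ᵥ vec (B * S) := by
  obtain ⟨σ, hσ, h⟩ := ((1 : Matrix d d ℝ) ⊗ₖ B).exists_pos_le_dotProduct_mulVec_of_signSel
  have hvec : ∀ X : Matrix ι d ℝ, vec (Bᵀ * X) = vec X ᵥ* ((1 : Matrix d d ℝ) ⊗ₖ B) := fun X => by
    rw [vec_mul_eq_mulVec, ← transpose_one, kroneckerMap_transpose, mulVec_transpose, transpose_one]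
  refine ⟨σ, hσ, fun S X hS hX => ?_⟩
  rw [vec_mul_eq_mulVec]
  rw [hvec] at hS
  exact h _ _ hS (by rwa [← hvec, Ne, vec_eq_zero_iff])

end Matrix

theorem norm2_sq (p : Fin 3 → ℝ) : norm2 p ^ 2 = p ⬝ᵥ p := by
  rw [norm2, Real.sq_sqrt (Finset.sum_nonneg fun i _ => sq_nonneg _)]
  exact Finset.sum_congr rfl fun i _ => sq _

theorem hatm_mulVec (p v : Fin 3 → ℝ) : hatm p *ᵥ v = p ⨯₃ v := by
  ext k
  fin_cases k <;> simp [hatm, mulVec, dotProduct, Fin.sum_univ_three, cross_apply] <;> ring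

theorem Lmat_mulVec {x : Fin 3 → ℝ} (hx : x ≠ 0) (v : Fin 3 → ℝ) :
    Lmat x *ᵥ v = cfun (norm2 x) • v
      + ((1 - cfun (norm2 x)) / norm2 x ^ 2 * (x ⬝ᵥ v)) • x + (1 / 2 : ℝ) • x ⨯₃ v := by
  rw [Lmat, if_neg hx, add_mulVec, add_mulVec, smul_mulVec, smul_mulVec, smul_mulVec,
    one_mulVec, vecMulVec_mulVec, hatm_mulVec, op_smul_eq_smul, smul_smul]

theorem dotProduct_Lmat_mulVec (x v : Fin 3 → ℝ) : x ⬝ᵥ (Lmat x *ᵥ v) = x ⬝ᵥ v := by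
  by_cases hx : x = 0
  · simp [hx]
  have hn : norm2 x ≠ 0 := fun h => hx (dotProduct_self_eq_zero.1 (by rw [← norm2_sq, h]; ring))
  rw [Lmat_mulVec hx, dotProduct_add, dotProduct_add, dotProduct_smul, dotProduct_smul,
    dotProduct_smul, dot_self_cross, ← norm2_sq, smul_eq_mul, smul_eq_mul, smul_eq_mul]
  field_simp
  ring

theorem cfun_mem_Icc {θ : ℝ} (h0 : 0 ≤ θ) (hπ : θ < π) : cfun θ ∈ Set.Icc (cos (θ / 2)) 1 := by
  rcases h0.eq_or_lt with rfl | hθ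
  · norm_num [cfun, _root_.sinc]
  have hθ2 : 0 < θ / 2 := by linarith
  have hθ2' : θ / 2 < π / 2 := by linarith
  have hsin : 0 < sin (θ / 2) := sin_pos_of_pos_of_lt_pi hθ2 (by linarith)
  have hcos : 0 < cos (θ / 2) := cos_pos_of_mem_Ioo ⟨by linarith, hθ2'⟩
  have hc : cfun θ = θ / 2 * cos (θ / 2) / sin (θ / 2) := by
    rw [cfun, _root_.sinc, _root_.sinc, if_neg hθ.ne', if_neg hθ2.ne',
      show sin θ = 2 * sin (θ / 2) * cos (θ / 2) by rw [← sin_two_mul]; ring_nf]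
    field_simp
  rw [hc, Set.mem_Icc, le_div_iff₀ hsin, div_le_one hsin]
  constructor
  · nlinarith [sin_le hθ2.le]
  · have := lt_tan hθ2 hθ2'
    rw [tan_eq_sin_div_cos, lt_div_iff₀ hcos] at this
    linarith

theorem cos_half_mul_le_dotProduct_Lmat_mulVec {x : Fin 3 → ℝ} {ρ : ℝ} (hx : norm2 x ≤ ρ)
    (hρ : ρ < π) (v : Fin 3 → ℝ) : cos (ρ / 2) * (v ⬝ᵥ v) ≤ v ⬝ᵥ (Lmat x *ᵥ v) := by
  have hx0 : 0 ≤ norm2 x := Real.sqrt_nonneg _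
  have hv : 0 ≤ v ⬝ᵥ v := Finset.sum_nonneg fun k _ => mul_self_nonneg (v k)
  have hcos : cos (ρ / 2) ≤ cos (norm2 x / 2) :=
    cos_le_cos_of_nonneg_of_le_pi (by linarith) (by linarith) (by linarith)
  obtain ⟨hc, hc1⟩ := cfun_mem_Icc hx0 (hx.trans_lt hρ)
  by_cases hxz : x = 0
  · rw [hxz, Lmat, if_pos rfl, one_mulVec]
    nlinarith [cos_le_one (ρ / 2)]
  · have ha : 0 ≤ (1 - cfun (norm2 x)) / norm2 x ^ 2 := div_nonneg (by linarith) (sq_nonneg _)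
    rw [Lmat_mulVec hxz, dotProduct_add, dotProduct_add, dotProduct_smul, dotProduct_smul,
      dotProduct_smul, dot_cross_self, smul_eq_mul, smul_eq_mul, smul_zero, add_zero,
      dotProduct_comm v x]
    nlinarith [mul_nonneg ha (sq_nonneg (x ⬝ᵥ v))]

theorem SimpleGraph.Connected.rows_eq_of_incidence_transpose_mul_eq_zero {V E d : Type*}
    [Fintype V] [DecidableEq V] {te he : E → V}
    (hconn : (SimpleGraph.fromRel fun i j => ∃ e, te e = i ∧ he e = j).Connected)
    {B : Matrix V E ℝ} (hB : ∀ i e, B i e = if i = te e then 1 else if i = he e then -1 else 0)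
    {X : Matrix V d ℝ} (hX : Bᵀ * X = 0) (i j : V) : X i = X j := by
  have hedge : ∀ e, te e ≠ he e → X (te e) = X (he e) := fun e hne => by
    ext k
    have := congrFun (congrFun hX e) k
    rw [mul_apply, Fintype.sum_eq_add (te e) (he e) hne fun c hc => by simp [hB, hc.1, hc.2]]
      at this
    simp only [transpose_apply, hB, if_neg hne.symm] at this
    simpa [sub_eq_zero, ← sub_eq_add_neg] using this
  obtain ⟨p⟩ := hconn.preconnected i j
  induction p with
  | nil => rfl
  | cons hadj _ ih =>
    rw [← ih]
    obtain ⟨hne, ⟨e, rfl, rfl⟩ | ⟨e, rfl, rfl⟩⟩ := hadj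
    · exact hedge e hne
    · exact (hedge e hne.symm).symm

/-- Block vectors of ℝ^{3n} and ℝ^{3m} are stored as `n × 3` and `m × 3` matrices, so that
`vec (Bᵀ * X)` and `vec (B * S)` are B̂ᵀx and B̂s up to a permutation of coordinates. -/
def IsFilippovSolution {n m : ℕ} (B : Matrix (Fin n) (Fin m) ℝ) (x : ℝ → Fin n → Fin 3 → ℝ) :
    Prop :=
  ∀ᵐ t, 0 < t → ∃ S : Matrix (Fin m) (Fin 3) ℝ, SignSel (vec S) (vec (Bᵀ * of (x t))) ∧
    HasDerivAt x (fun i => -(Lmat (x t i) *ᵥ (B * S) i)) t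

section Trajectory

variable {n m : ℕ} (B : Matrix (Fin n) (Fin m) ℝ) {x : ℝ → Fin n → Fin 3 → ℝ}
  {S : Matrix (Fin m) (Fin 3) ℝ} {t : ℝ}

theorem hasDerivAt_sum_dotProduct_self
    (hx : HasDerivAt x (fun i => -(Lmat (x t i) *ᵥ (B * S) i)) t)
    (hS : SignSel (vec S) (vec (Bᵀ * of (x t)))) :
    HasDerivAt (fun u => ∑ i, x u i ⬝ᵥ x u i) (-2 * ∑ ℓ, |vec (Bᵀ * of (x t)) ℓ|) t := by
  have hrow : ∀ i, HasDerivAt (fun u => x u i) (-(Lmat (x t i) *ᵥ (B * S) i)) t :=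
    fun i => hasDerivAt_pi.1 hx i
  refine (HasDerivAt.fun_sum fun i _ => (hrow i).dotProduct (hrow i)).congr_deriv ?_
  calc ∑ i, (-(Lmat (x t i) *ᵥ (B * S) i) ⬝ᵥ x t i + x t i ⬝ᵥ -(Lmat (x t i) *ᵥ (B * S) i))
      = -2 * ∑ i, x t i ⬝ᵥ (B * S) i := by
        rw [Finset.mul_sum]
        refine Finset.sum_congr rfl fun i _ => ?_
        rw [dotProduct_comm _ (x t i), dotProduct_neg, dotProduct_Lmat_mulVec]
        ring
    _ = -2 * ∑ ℓ, |vec (Bᵀ * of (x t)) ℓ| := by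
        rw [← hS.dotProduct_eq, dotProduct_comm, ← vec_dotProduct_vec_mul,
          vec_dotProduct_vec_eq_sum]
        rfl

theorem hasDerivAt_sum_abs_vec_transpose_mul
    (hx : HasDerivAt x (fun i => -(Lmat (x t i) *ᵥ (B * S) i)) t)
    (hS : SignSel (vec S) (vec (Bᵀ * of (x t))))
    (hz : ∀ ℓ, vec (Bᵀ * of (x t)) ℓ = 0 → deriv (fun u => vec (Bᵀ * of (x u)) ℓ) t = 0) :
    HasDerivAt (fun u => ∑ ℓ, |vec (Bᵀ * of (x u)) ℓ|)
      (-∑ i, (B * S) i ⬝ᵥ (Lmat (x t i) *ᵥ (B * S) i)) t := by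
  set D : Matrix (Fin n) (Fin 3) ℝ := of fun i => -(Lmat (x t i) *ᵥ (B * S) i)
  have hzℓ : ∀ ℓ, HasDerivAt (fun u => vec (Bᵀ * of (x u)) ℓ) (vec (Bᵀ * D) ℓ) t := fun ℓ => by
    show HasDerivAt (fun u => ∑ i, B i ℓ.2 * x u i ℓ.1) (∑ i, B i ℓ.2 * D i ℓ.1) t
    exact HasDerivAt.fun_sum fun i _ =>
      (hasDerivAt_pi.1 (hasDerivAt_pi.1 hx i) ℓ.1).const_mul (B i ℓ.2)
  refine (HasDerivAt.fun_sum fun ℓ _ => (hzℓ ℓ).abs_of_mul_eq_abs (hS.mul_eq_abs ℓ)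
    fun h => (hzℓ ℓ).deriv ▸ hz ℓ h).congr_deriv ?_
  change vec S ⬝ᵥ vec (Bᵀ * D) = _
  rw [dotProduct_comm, ← vec_dotProduct_vec_mul, dotProduct_comm, vec_dotProduct_vec_eq_sum,
    ← Finset.sum_neg_distrib]
  exact Finset.sum_congr rfl fun i _ => dotProduct_neg _ _

namespace IsFilippovSolution

variable {B} (hx : ∀ b, 0 ≤ b → AbsolutelyContinuousOnInterval x 0 b)
  (hsol : IsFilippovSolution B x)
include hx hsol

theorem norm2_le_sqrt {t : ℝ} (ht : 0 ≤ t) (i : Fin n) :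
    norm2 (x t i) ≤ √(∑ j, norm2 (x 0 j) ^ 2) := by
  have hW : AntitoneOn (fun u => ∑ j, x u j ⬝ᵥ x u j) (Ici 0) := by
    refine antitoneOn_of_ae_deriv_nonpos (fun b hb => ?_) ?_
    · exact AbsolutelyContinuousOnInterval.finset_sum fun j _ =>
        AbsolutelyContinuousOnInterval.finset_sum fun k _ =>
          ((hx b hb).apply_apply j k).fun_mul ((hx b hb).apply_apply j k)
    · filter_upwards [hsol] with u hu hupos
      obtain ⟨S, hS, hxu⟩ := hu hupos
      rw [(hasDerivAt_sum_dotProduct_self B hxu hS).deriv]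
      have := Finset.sum_nonneg fun ℓ (_ : ℓ ∈ Finset.univ) => abs_nonneg (vec (Bᵀ * of (x u)) ℓ)
      linarith
  refine Real.le_sqrt_of_sq_le ?_
  simp only [norm2_sq]
  calc x t i ⬝ᵥ x t i ≤ ∑ j, x t j ⬝ᵥ x t j :=
        Finset.single_le_sum (f := fun j => x t j ⬝ᵥ x t j)
          (fun j _ => Finset.sum_nonneg fun k _ => mul_self_nonneg (x t j k)) (Finset.mem_univ i)
    _ ≤ ∑ j, x 0 j ⬝ᵥ x 0 j := hW self_mem_Ici ht ht

theorem exists_forall_ge_transpose_mul_eq_zero (h0 : ∑ i, norm2 (x 0 i) ^ 2 < π ^ 2) :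
    ∃ T ≥ 0, ∀ t ≥ T, Bᵀ * of (x t) = 0 := by
  set ρ := √(∑ i, norm2 (x 0 i) ^ 2)
  have hρ : ρ < π := (Real.sqrt_lt' pi_pos).2 h0
  have hcos : 0 < cos (ρ / 2) :=
    cos_pos_of_mem_Ioo ⟨by linarith [pi_pos, Real.sqrt_nonneg (∑ i, norm2 (x 0 i) ^ 2)],
      by linarith⟩
  obtain ⟨σ, hσ, hσle⟩ := exists_pos_le_vec_mul_dotProduct_of_signSel B (Fin 3)
  set V : ℝ → ℝ := fun u => ∑ ℓ, |vec (Bᵀ * of (x u)) ℓ|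
  have hV0 : ∀ u, 0 ≤ V u := fun u => Finset.sum_nonneg fun _ _ => abs_nonneg _
  have hVac : ∀ b, 0 ≤ b → AbsolutelyContinuousOnInterval V 0 b := fun b hb => by
    have hedge : ∀ ℓ : Fin 3 × Fin m,
        AbsolutelyContinuousOnInterval (fun u => ∑ i, B i ℓ.2 * x u i ℓ.1) 0 b := fun ℓ =>
      AbsolutelyContinuousOnInterval.finset_sum fun i _ =>
        ((hx b hb).apply_apply i ℓ.1).const_mul (B i ℓ.2)
    exact AbsolutelyContinuousOnInterval.finset_sum fun ℓ _ => (hedge ℓ).abs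
  have hVderiv : ∀ᵐ t, 0 < t → 0 < V t → deriv V t ≤ -(cos (ρ / 2) * σ) := by
    have hz := ae_all_iff.2 fun ℓ => ae_deriv_eq_zero_of_eq (fun u => vec (Bᵀ * of (x u)) ℓ) 0
    filter_upwards [hsol, hz] with t ht hzt htpos hVt
    obtain ⟨S, hS, hxt⟩ := ht htpos
    have hz0 : Bᵀ * of (x t) ≠ 0 := by
      rintro h
      simp only [V, h, vec_zero, Pi.zero_apply, abs_zero, Finset.sum_const_zero, lt_irrefl] at hVt
    rw [(hasDerivAt_sum_abs_vec_transpose_mul B hxt hS hzt).deriv, neg_le_neg_iff]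
    calc cos (ρ / 2) * σ ≤ cos (ρ / 2) * ∑ i, (B * S) i ⬝ᵥ (B * S) i := by
          rw [← vec_dotProduct_vec_eq_sum]
          exact mul_le_mul_of_nonneg_left (hσle S _ hS hz0) hcos.le
      _ ≤ ∑ i, (B * S) i ⬝ᵥ (Lmat (x t i) *ᵥ (B * S) i) := by
          rw [Finset.mul_sum]
          exact Finset.sum_le_sum fun i _ => cos_half_mul_le_dotProduct_Lmat_mulVec
            (norm2_le_sqrt hx hsol htpos.le i) hρ _
  have hκ : 0 < cos (ρ / 2) * σ := mul_pos hcos hσ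
  refine ⟨V 0 / (cos (ρ / 2) * σ), div_nonneg (hV0 0) hκ.le, fun t ht => ?_⟩
  have hVt := (Finset.sum_eq_zero_iff_of_nonneg fun ℓ _ => abs_nonneg _).1
    (eq_zero_of_ae_deriv_le_neg hκ hV0 hVac hVderiv t ht)
  exact vec_eq_zero_iff.1 (funext fun ℓ => abs_eq_zero.1 (hVt ℓ (Finset.mem_univ ℓ)))

end IsFilippovSolution

end Trajectory

open MeasureTheory in
theorem finite_time_attitude_synchronization_general {n m : ℕ}
    (te he : Fin m → Fin n)
    (hconn : (SimpleGraph.fromRel (fun i j => ∃ e, te e = i ∧ he e = j)).Connected)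
    (B : Matrix (Fin n) (Fin m) ℝ)
    (hB : ∀ i e, B i e = if i = te e then 1 else if i = he e then -1 else 0)
    (x : ℝ → Fin n → Fin 3 → ℝ)
    (hlip : ∀ a b : ℝ, 0 ≤ a → ∃ K : NNReal, LipschitzOnWith K x (Set.Icc a b))
    (h0 : ∑ i, norm2 (x 0 i) ^ 2 < Real.pi ^ 2)
    (hdyn : ∀ᵐ t ∂(volume : Measure ℝ), 0 ≤ t →
      ∃ s : Fin m → Fin 3 → ℝ,
        SignSelV s (fun e k => ∑ i, B i e * x t i k) ∧
        HasDerivAt x (fun i => -(Lmat (x t i)).mulVec (∑ e, B i e • s e)) t) :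
    (∀ t ≥ (0 : ℝ), ∀ i, norm2 (x t i) < Real.pi) ∧
    ∃ tstar : ℝ, 0 ≤ tstar ∧ ∀ t ≥ tstar, ∀ i j, x t i = x t j := by
  have hx : ∀ b, 0 ≤ b → AbsolutelyContinuousOnInterval x 0 b := fun b hb => by
    obtain ⟨K, hK⟩ := hlip 0 b le_rfl
    rw [← uIcc_of_le hb] at hK
    exact hK.absolutelyContinuousOnInterval
  have hsol : IsFilippovSolution B x := by
    filter_upwards [hdyn] with t ht htpos
    obtain ⟨s, hs, hxt⟩ := ht htpos.le
    refine ⟨of s, fun ℓ => hs ℓ.2 ℓ.1, ?_⟩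
    convert hxt using 4 with i
    rw [mul_apply_eq_vecMul, vecMul_eq_sum]
    rfl
  have hρ : √(∑ i, norm2 (x 0 i) ^ 2) < π := (Real.sqrt_lt' pi_pos).2 h0
  obtain ⟨T, hT, hz⟩ := hsol.exists_forall_ge_transpose_mul_eq_zero hx h0
  exact ⟨fun t ht i => (hsol.norm2_le_sqrt hx ht i).trans_lt hρ, T, hT, fun t ht =>
    hconn.rows_eq_of_incidence_transpose_mul_eq_zero hB (hz t ht)⟩

open MeasureTheory in
/-- main theorem, finite-time attitude synchronization.  If the
graph is connected and ∑ᵢ ‖xᵢ(0)‖² < π², then ‖xᵢ(t)‖ < π for all t ≥ 0 and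
consensus x₁(t) = ⋯ = xₙ(t) is reached in finite time. -/
theorem finite_time_attitude_synchronization {n m : ℕ}
    (te he : Fin m → Fin n) (hloop : ∀ e, te e ≠ he e)
    (hconn : (SimpleGraph.fromRel (fun i j => ∃ e, te e = i ∧ he e = j)).Connected)
    (B : Matrix (Fin n) (Fin m) ℝ)
    (hB : ∀ i e, B i e = if i = te e then 1 else if i = he e then -1 else 0)
    (x : ℝ → Fin n → Fin 3 → ℝ)
    (hlip : ∀ a b : ℝ, 0 ≤ a → ∃ K : NNReal, LipschitzOnWith K x (Set.Icc a b))
    (h0 : ∑ i, norm2 (x 0 i) ^ 2 < Real.pi ^ 2)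
    (hdyn : ∀ᵐ t ∂(volume : Measure ℝ), 0 ≤ t →
      ∃ s : Fin m → Fin 3 → ℝ,
        SignSelV s (fun e k => ∑ i, B i e * x t i k) ∧
        HasDerivAt x (fun i => -(Lmat (x t i)).mulVec (∑ e, B i e • s e)) t) :
    (∀ t ≥ (0 : ℝ), ∀ i, norm2 (x t i) < Real.pi) ∧
    ∃ tstar : ℝ, 0 ≤ tstar ∧ ∀ t ≥ tstar, ∀ i j, x t i = x t j :=
  finite_time_attitude_synchronization_general te he hconn B hB x hlip h0 hdyn
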